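/- arXiv:1205.6510 — 3 statements merged into one kernel-verified Lean document; each statement's English description precedes it below -/
import Mathlib

section
/- For any finite connected simple graphs G₁, …, G_m that are pairwise non-isomorphic and each non-positive, there exist kernels W₁, …, W_m such that t(G_i, W_i) < 0 for every i, and t(G_i, W_j) ≠ t(G_j, W_j) whenever i ≠ j. -/
open MeasureTheory

noncomputable section

/-- The unit interval `[0,1]` as a measure space. -/
abbrev UI : Type := Set.Icc (0:ℝ) 1

/-- A kernel is a symmetric bounded measurable function `[0,1]² → ℝ`. -/
def IsKernel (W : UI → UI → ℝ) : Prop :=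
  Measurable (Function.uncurry W) ∧ (∀ x y, W x y = W y x) ∧ ∃ C : ℝ, ∀ x y, |W x y| ≤ C

open scoped Classical in
/-- The homomorphism density `t(G,W) = ∫_{[0,1]^V} ∏_{(a,b)∈E} W(p(a),p(b)) dp`. -/
noncomputable def homDensity {V : Type} [Fintype V] (G : SimpleGraph V) (W : UI → UI → ℝ) : ℝ :=
  ∫ p : V → UI, ∏ e ∈ G.edgeFinset, W (p (Quot.out e).1) (p (Quot.out e).2)

/-- A graph is positive if `t(G,W) ≥ 0` for every kernel `W`. -/
def Positive {V : Type} [Fintype V] (G : SimpleGraph V) : Prop :=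
  ∀ W : UI → UI → ℝ, IsKernel W → 0 ≤ homDensity G W

/-!
Fix kernels `Uᵢ` with `t(Gᵢ, Uᵢ) < 0`. For a step kernel `Z` taking values `x` on the blocks of an
equipartition of `[0,1]`, `t(G, Z)` is a polynomial in `x`. The monomial of an injective
assignment of the vertices of `G` to blocks occurs in it with positive coefficient, and it occurs
in the polynomial of a graph `G'` with at most as many vertices only if `G' ≅ G` (this uses that
every vertex of the connected graph `G` lies on an edge). Hence a generic `x` makes the numbers
`t(Gᵢ, Z)` nonzero and pairwise distinct. Next, `s ↦ t(G, U + s Z)` is a polynomial with leading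
coefficient `t(G, Z)`, so for each `j` the differences `t(Gᵢ, Uⱼ + s Z) - t(Gⱼ, Uⱼ + s Z)` are
nonzero polynomials in `s`, and `Wⱼ = Uⱼ + s Z` works for every small `s ≠ 0` avoiding their roots.
-/

open Finset Filter Topology Polynomial
open scoped Classical

theorem MvPolynomial.exists_forall_eval_ne_zero {R σ ι : Type*} [CommRing R] [IsDomain R]
    [Infinite R] (s : Finset ι) (P : ι → MvPolynomial σ R) (hP : ∀ i ∈ s, P i ≠ 0) :
    ∃ x, ∀ i ∈ s, eval x (P i) ≠ 0 := by
  obtain ⟨x, hx⟩ : ∃ x, eval x (∏ i ∈ s, P i) ≠ 0 := by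
    by_contra! h
    exact prod_ne_zero_iff.2 hP (funext fun x => by simpa using h x)
  exact ⟨x, prod_ne_zero_iff.1 (by simpa using hx)⟩

theorem Polynomial.exists_eval_neg_forall_eval_ne_zero {ι : Type*} {p : ℝ[X]} (hp : p.eval 0 < 0)
    (s : Finset ι) (q : ι → ℝ[X]) (hq : ∀ i ∈ s, q i ≠ 0) :
    ∃ t, p.eval t < 0 ∧ ∀ i ∈ s, (q i).eval t ≠ 0 := by
  have hneg : ∀ᶠ t in 𝓝[≠] 0, p.eval t < 0 :=
    nhdsWithin_le_nhds ((p.continuous.tendsto 0).eventually (eventually_lt_nhds hp))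
  have hroots : ∀ᶠ t in 𝓝[≠] (0 : ℝ), ∀ i ∈ s, (q i).eval t ≠ 0 :=
    (eventually_all_finset s).2 fun i hi =>
      ((finite_setOfPred_isRoot (hq i hi)).eventually_cofinite_notMem).filter_mono
        (nhdsNE_le_cofinite 0)
  exact (hneg.and hroots).exists

theorem Sym2.map_eq_mk_out {α β : Type*} (f : α → β) (e : Sym2 α) :
    Sym2.map f e = s(f (Quot.out e).1, f (Quot.out e).2) := by
  conv_lhs => rw [← Quot.out_eq e]
  rfl

theorem Multiset.toFinsupp_map_val {α β : Type*} [DecidableEq β] (s : Finset α) (f : α → β) :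
    Multiset.toFinsupp (s.val.map f) = ∑ a ∈ s, Finsupp.single (f a) 1 := by
  induction s using Finset.cons_induction with
  | empty => simp
  | cons a s ha ih =>
    rw [cons_val, Multiset.map_cons, ← singleton_add, toFinsupp_add,
      toFinsupp_singleton, Finset.sum_cons, ih]

theorem SimpleGraph.nonempty_iso_of_map_edgeFinset_eq {V V' β : Type*} [Fintype V] [Fintype V']
    [Nonempty V'] {G : SimpleGraph V} {G' : SimpleGraph V'} [DecidableRel G.Adj]
    [DecidableRel G'.Adj] (hG : G.Connected) (hcard : Fintype.card V' ≤ Fintype.card V)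
    (φ₀ : V ↪ β) (φ : V' → β)
    (h : G'.edgeFinset.val.map (Sym2.map φ) = G.edgeFinset.val.map (Sym2.map φ₀)) :
    Nonempty (G ≃g G') := by
  obtain ⟨e, he⟩ : ∃ e : V ≃ V', G'.edgeFinset = G.edgeFinset.map e.toEmbedding.sym2Map := by
    rcases subsingleton_or_nontrivial V with hV | hV
    · have : Subsingleton V' := Fintype.card_le_one_iff_subsingleton.1
        (hcard.trans (Fintype.card_le_one_iff_subsingleton.2 hV))
      refine ⟨equivOfSubsingletonOfSubsingleton (fun _ => Classical.arbitrary V')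
        fun _ => hG.nonempty.some, ?_⟩
      rw [edgeFinset_eq_empty.2 (Subsingleton.elim G' ⊥),
        edgeFinset_eq_empty.2 (Subsingleton.elim G ⊥), Finset.map_empty]
    · -- every vertex of `G` lies on an edge, so `φ` hits every value of `φ₀`
      have hhit : ∀ v, ∃ u, φ u = φ₀ v := fun v => by
        obtain ⟨w, hvw⟩ := G.mem_support.1 (hG.preconnected.support_eq_univ ▸ Set.mem_univ v)
        obtain ⟨e', -, he'⟩ := Multiset.mem_map.1
          (h ▸ Multiset.mem_map_of_mem (Sym2.map φ₀) (G.mem_edgeFinset.2 (G.mem_edgeSet.2 hvw)))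
        obtain ⟨u, -, hu⟩ := Sym2.mem_map.1
          (he' ▸ Sym2.mem_map.2 ⟨v, Sym2.mem_mk_left v w, rfl⟩ : φ₀ v ∈ Sym2.map φ e')
        exact ⟨u, hu⟩
      choose ψ hψ using hhit
      have hψ_inj : Function.Injective ψ := fun a b hab => φ₀.injective (by rw [← hψ, ← hψ, hab])
      let e := Equiv.ofBijective ψ <| (Fintype.bijective_iff_injective_and_card ψ).2
        ⟨hψ_inj, le_antisymm (Fintype.card_le_of_injective ψ hψ_inj) hcard⟩
      have hφe : φ ∘ e = φ₀ := funext hψ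
      have hφ_inj : Function.Injective φ := (hφe ▸ φ₀.injective).of_comp_right e.surjective
      refine ⟨e, Finset.val_inj.1 (Multiset.map_injective (Sym2.map.injective hφ_inj) ?_)⟩
      rw [h, Finset.map_val, Multiset.map_map, ← hφe]
      exact Multiset.map_congr rfl fun x _ => (Sym2.map_map x).symm
  have hmap : G.map e.toEmbedding = G' := by
    rw [← edgeFinset_inj, edgeFinset_map, he]
  exact ⟨hmap ▸ Iso.map e G⟩

theorem IsKernel.add_const_mul {U Z : UI → UI → ℝ} (hU : IsKernel U) (hZ : IsKernel Z) (s : ℝ) :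
    IsKernel fun a b => U a b + s * Z a b := by
  obtain ⟨hUm, hUs, CU, hCU⟩ := hU
  obtain ⟨hZm, hZs, CZ, hCZ⟩ := hZ
  refine ⟨hUm.add (hZm.const_mul s), fun a b => ?_, CU + |s| * CZ, fun a b => ?_⟩
  · change U a b + s * Z a b = U b a + s * Z b a
    rw [hUs, hZs]
  · calc |U a b + s * Z a b| ≤ |U a b| + |s| * |Z a b| :=
          (abs_add_le _ _).trans_eq (by rw [abs_mul])
      _ ≤ CU + |s| * CZ :=
          add_le_add (hCU a b) (mul_le_mul_of_nonneg_left (hCZ a b) (abs_nonneg s))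

section EdgeProduct

variable {V : Type}

def edgeProd (F : Finset (Sym2 V)) (W : UI → UI → ℝ) (p : V → UI) : ℝ :=
  ∏ e ∈ F, W (p (Quot.out e).1) (p (Quot.out e).2)

theorem homDensity_eq_integral_edgeProd [Fintype V] (G : SimpleGraph V) (W : UI → UI → ℝ) :
    homDensity G W = ∫ p, edgeProd G.edgeFinset W p := rfl

theorem measurable_edgeProd (F : Finset (Sym2 V)) {W : UI → UI → ℝ}
    (hW : Measurable (Function.uncurry W)) : Measurable (edgeProd F W) :=
  Finset.measurable_prod _ fun e _ =>
    show Measurable (Function.uncurry W ∘ fun p : V → UI => (p (Quot.out e).1, p (Quot.out e).2))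
    from hW.comp ((measurable_pi_apply (Quot.out e).1).prodMk (measurable_pi_apply (Quot.out e).2))

theorem abs_edgeProd_le (F : Finset (Sym2 V)) {W : UI → UI → ℝ} {C : ℝ}
    (hC : ∀ x y, |W x y| ≤ C) (p : V → UI) : |edgeProd F W p| ≤ C ^ #F := by
  rw [edgeProd, abs_prod, ← prod_const]
  exact prod_le_prod (fun _ _ => abs_nonneg _) fun _ _ => hC _ _

theorem integrable_edgeProd_mul_edgeProd [Fintype V] (F F' : Finset (Sym2 V)) {Z U : UI → UI → ℝ}
    (hZ : IsKernel Z) (hU : IsKernel U) :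
    Integrable fun p => edgeProd F Z p * edgeProd F' U p := by
  obtain ⟨hZm, -, CZ, hCZ⟩ := hZ
  obtain ⟨hUm, -, CU, hCU⟩ := hU
  refine .of_bound
    ((measurable_edgeProd F hZm).mul (measurable_edgeProd F' hUm)).aestronglyMeasurable
    (CZ ^ #F * CU ^ #F') (ae_of_all _ fun p => ?_)
  rw [norm_mul, Real.norm_eq_abs, Real.norm_eq_abs]
  exact mul_le_mul (abs_edgeProd_le F hCZ p) (abs_edgeProd_le F' hCU p) (abs_nonneg _)
    ((abs_nonneg _).trans (abs_edgeProd_le F hCZ p))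

end EdgeProduct

section LinePolynomial

variable {V : Type} [Fintype V]

def lineDensityPoly (G : SimpleGraph V) (U Z : UI → UI → ℝ) : ℝ[X] :=
  ∑ F ∈ G.edgeFinset.powerset,
    C (∫ p, edgeProd F Z p * edgeProd (G.edgeFinset \ F) U p) * X ^ #F

theorem eval_lineDensityPoly (G : SimpleGraph V) {U Z : UI → UI → ℝ} (hU : IsKernel U)
    (hZ : IsKernel Z) (s : ℝ) :
    (lineDensityPoly G U Z).eval s = homDensity G fun a b => U a b + s * Z a b := by
  have hexpand : ∀ p, edgeProd G.edgeFinset (fun a b => U a b + s * Z a b) p =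
      ∑ F ∈ G.edgeFinset.powerset,
        s ^ #F * (edgeProd F Z p * edgeProd (G.edgeFinset \ F) U p) := fun p => by
    simp_rw [edgeProd, add_comm (U _ _), prod_add, prod_mul_distrib, prod_const, mul_assoc]
  simp_rw [homDensity_eq_integral_edgeProd, hexpand, lineDensityPoly, eval_finsetSum, eval_mul,
    eval_C, eval_pow, eval_X]
  rw [integral_finsetSum _ fun F _ =>
    (integrable_edgeProd_mul_edgeProd F _ hZ hU).const_mul _]
  simp_rw [integral_const_mul, mul_comm]

theorem leadingCoeff_lineDensityPoly (G : SimpleGraph V) (U Z : UI → UI → ℝ)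
    (hZ : homDensity G Z ≠ 0) : (lineDensityPoly G U Z).leadingCoeff = homDensity G Z := by
  have hcoeff : (lineDensityPoly G U Z).coeff #G.edgeFinset = homDensity G Z := by
    rw [lineDensityPoly, finsetSum_coeff, sum_eq_single_of_mem _ (mem_powerset_self _)]
    · simp [edgeProd, homDensity_eq_integral_edgeProd]
    · intro F hF hne
      have : #F ≠ #G.edgeFinset :=
        (card_lt_card (ssubset_of_subset_of_ne (mem_powerset.1 hF) hne)).ne
      simp [coeff_X_pow, this.symm]
  have hdeg : (lineDensityPoly G U Z).natDegree = #G.edgeFinset := by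
    refine natDegree_eq_of_le_of_coeff_ne_zero ?_ (hcoeff ▸ hZ)
    exact natDegree_sum_le_of_forall_le _ _ fun F hF =>
      (natDegree_C_mul_X_pow_le _ _).trans (card_le_card (mem_powerset.1 hF))
  rw [leadingCoeff, hdeg, hcoeff]

theorem lineDensityPoly_ne {V' : Type} [Fintype V'] {G : SimpleGraph V} {G' : SimpleGraph V'}
    (U : UI → UI → ℝ) {Z : UI → UI → ℝ} (hZ : homDensity G Z ≠ 0) (hZ' : homDensity G' Z ≠ 0)
    (hne : homDensity G Z ≠ homDensity G' Z) : lineDensityPoly G U Z ≠ lineDensityPoly G' U Z :=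
  fun h => hne <| by
    rw [← leadingCoeff_lineDensityPoly G U Z hZ, ← leadingCoeff_lineDensityPoly G' U Z hZ', h]

end LinePolynomial

section StepKernel

variable (n : ℕ)

def block (t : UI) : Fin (n + 1) :=
  ⟨min ⌊(t : ℝ) * (n + 1)⌋₊ n, Nat.lt_succ_of_le (min_le_right _ _)⟩

theorem measurable_block : Measurable (block n) :=
  (measurable_of_countable fun k : ℕ =>
      (⟨min k n, Nat.lt_succ_of_le (min_le_right _ _)⟩ : Fin (n + 1))).comp
    (Nat.measurable_floor.comp (measurable_subtype_coe.mul measurable_const))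

theorem block_eq {t : UI} {c : Fin (n + 1)} (h₁ : (c : ℝ) ≤ t * (n + 1))
    (h₂ : (t : ℝ) * (n + 1) < c + 1) : block n t = c := by
  have hfloor : ⌊(t : ℝ) * (n + 1)⌋₊ = c :=
    (Nat.floor_eq_iff ((Nat.cast_nonneg _).trans h₁)).2 ⟨h₁, h₂⟩
  ext
  simp [block, hfloor, Nat.lt_succ_iff.1 c.isLt]

def blockMeasure : Measure (Fin (n + 1)) := volume.map (block n)

instance : IsProbabilityMeasure (blockMeasure n) :=
  Measure.isProbabilityMeasure_map (measurable_block n).aemeasurable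

theorem blockMeasure_singleton_pos (c : Fin (n + 1)) : 0 < blockMeasure n {c} := by
  have hn : (0 : ℝ) < n + 1 := by positivity
  have hc : (c : ℝ) + 1 ≤ n + 1 := by exact_mod_cast c.isLt
  let a : UI := ⟨c / (n + 1), by positivity, (div_le_one hn).2 (by linarith)⟩
  let b : UI := ⟨(c + 1) / (n + 1), by positivity, (div_le_one hn).2 hc⟩
  have hsub : Set.Ico a b ⊆ block n ⁻¹' {c} := fun t ⟨hat, htb⟩ =>
    block_eq n ((div_le_iff₀ hn).1 (Subtype.coe_le_coe.2 hat))
      ((lt_div_iff₀ hn).1 (Subtype.coe_lt_coe.2 htb))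
  rw [blockMeasure, Measure.map_apply (measurable_block n) (measurableSet_singleton c)]
  refine lt_of_lt_of_le ?_ (measure_mono hsub)
  rw [unitInterval.volume_Ico, ENNReal.ofReal_pos, sub_pos]
  exact div_lt_div_of_pos_right (lt_add_one _) hn

def blockWeight {V : Type} [Fintype V] (q : V → Fin (n + 1)) : ℝ :=
  ∏ v, (blockMeasure n {q v}).toReal

theorem blockWeight_pos {V : Type} [Fintype V] (q : V → Fin (n + 1)) : 0 < blockWeight n q :=
  prod_pos fun v _ =>
    ENNReal.toReal_pos (blockMeasure_singleton_pos n (q v)).ne' (measure_ne_top _ _)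

def stepKernel (x : Sym2 (Fin (n + 1)) → ℝ) : UI → UI → ℝ := fun a b => x s(block n a, block n b)

theorem isKernel_stepKernel (x : Sym2 (Fin (n + 1)) → ℝ) : IsKernel (stepKernel n x) := by
  obtain ⟨C, hC⟩ := (Set.finite_range fun e => |x e|).bddAbove
  refine ⟨?_, fun a b => by simp only [stepKernel, Sym2.eq_swap], C, fun a b => hC ⟨_, rfl⟩⟩
  exact (measurable_of_countable fun cd : Fin (n + 1) × Fin (n + 1) => x s(cd.1, cd.2)).comp
    (((measurable_block n).comp measurable_fst).prodMk ((measurable_block n).comp measurable_snd))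

def stepDensityPoly {V : Type} [Fintype V] (G : SimpleGraph V) :
    MvPolynomial (Sym2 (Fin (n + 1))) ℝ :=
  ∑ q : V → Fin (n + 1),
    MvPolynomial.C (blockWeight n q) * ∏ e ∈ G.edgeFinset, MvPolynomial.X (Sym2.map q e)

theorem homDensity_stepKernel {V : Type} [Fintype V] (G : SimpleGraph V)
    (x : Sym2 (Fin (n + 1)) → ℝ) :
    homDensity G (stepKernel n x) = MvPolynomial.eval x (stepDensityPoly n G) := by
  set g : (V → Fin (n + 1)) → ℝ := fun q => ∏ e ∈ G.edgeFinset, x (Sym2.map q e)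
  have hg : ∀ p, edgeProd G.edgeFinset (stepKernel n x) p = g (block n ∘ p) := fun p =>
    prod_congr rfl fun e _ => by simp only [stepKernel, Sym2.map_eq_mk_out, Function.comp]
  have hpres : MeasurePreserving (fun p : V → UI => block n ∘ p) volume
      (Measure.pi fun _ => blockMeasure n) :=
    measurePreserving_pi _ _ fun _ => ⟨measurable_block n, rfl⟩
  calc homDensity G (stepKernel n x)
      = ∫ q, g q ∂(Measure.pi fun _ => blockMeasure n) := by
        simp_rw [homDensity_eq_integral_edgeProd, hg]
        rw [← hpres.map_eq, integral_map hpres.measurable.aemeasurable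
          (measurable_of_countable g).aestronglyMeasurable]
    _ = ∑ q, blockWeight n q * g q := by
        rw [integral_fintype .of_finite]
        refine sum_congr rfl fun q _ => ?_
        rw [smul_eq_mul, Measure.real, ← Set.univ_pi_singleton, Measure.pi_pi, ENNReal.toReal_prod,
          blockWeight]
    _ = MvPolynomial.eval x (stepDensityPoly n G) := by
        simp [stepDensityPoly, g]

end StepKernel

section StepDensityPoly

variable (n : ℕ) {V V' : Type} [Fintype V] [Fintype V']

def edgeExponent {β : Type*} [DecidableEq β] (G : SimpleGraph V) (q : V → β) : Sym2 β →₀ ℕ :=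
  Multiset.toFinsupp (G.edgeFinset.val.map (Sym2.map q))

theorem prod_X_eq_monomial_edgeExponent (G : SimpleGraph V) (q : V → Fin (n + 1)) :
    ∏ e ∈ G.edgeFinset, MvPolynomial.X (Sym2.map q e) =
      MvPolynomial.monomial (edgeExponent G q) (1 : ℝ) := by
  simp [edgeExponent, Multiset.toFinsupp_map_val, MvPolynomial.X, MvPolynomial.monomial_sum_one]

theorem coeff_stepDensityPoly (G : SimpleGraph V) (d : Sym2 (Fin (n + 1)) →₀ ℕ) :
    (stepDensityPoly n G).coeff d = ∑ q with edgeExponent G q = d, blockWeight n q := by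
  simp [stepDensityPoly, prod_X_eq_monomial_edgeExponent, MvPolynomial.coeff_sum, sum_filter]

theorem coeff_stepDensityPoly_pos (G : SimpleGraph V) (φ₀ : V ↪ Fin (n + 1)) :
    0 < (stepDensityPoly n G).coeff (edgeExponent G φ₀) := by
  rw [coeff_stepDensityPoly]
  exact sum_pos (fun q _ => blockWeight_pos n q) ⟨φ₀, by simp⟩

theorem coeff_stepDensityPoly_eq_zero [Nonempty V'] {G : SimpleGraph V} (G' : SimpleGraph V')
    (hG : G.Connected) (hcard : Fintype.card V' ≤ Fintype.card V) (hiso : IsEmpty (G ≃g G'))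
    (φ₀ : V ↪ Fin (n + 1)) : (stepDensityPoly n G').coeff (edgeExponent G φ₀) = 0 := by
  rw [coeff_stepDensityPoly]
  refine sum_eq_zero fun q hq => hiso.elim' ?_
  exact (G.nonempty_iso_of_map_edgeFinset_eq hG hcard φ₀ q
    (Multiset.toFinsupp.injective (mem_filter.1 hq).2)).some

theorem stepDensityPoly_ne_zero (G : SimpleGraph V) (hn : Fintype.card V ≤ n + 1) :
    stepDensityPoly n G ≠ 0 := fun h => by
  obtain ⟨φ₀⟩ := Function.Embedding.nonempty_of_card_le (hn.trans_eq (Fintype.card_fin _).symm)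
  simpa [h] using coeff_stepDensityPoly_pos n G φ₀

theorem stepDensityPoly_ne {G : SimpleGraph V} {G' : SimpleGraph V'} (hG : G.Connected)
    (hG' : G'.Connected) (hn : Fintype.card V ≤ n + 1) (hn' : Fintype.card V' ≤ n + 1)
    (hiso : IsEmpty (G ≃g G')) : stepDensityPoly n G ≠ stepDensityPoly n G' := by
  wlog hcard : Fintype.card V' ≤ Fintype.card V generalizing V V'
  · exact (this hG' hG hn' hn ⟨fun f => hiso.elim f.symm⟩ (le_of_not_ge hcard)).symm
  have : Nonempty V' := hG'.nonempty
  obtain ⟨φ₀⟩ := Function.Embedding.nonempty_of_card_le (hn.trans_eq (Fintype.card_fin _).symm)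
  intro h
  have hpos := coeff_stepDensityPoly_pos n G φ₀
  rw [h, coeff_stepDensityPoly_eq_zero n G' hG hcard hiso φ₀] at hpos
  exact hpos.false

end StepDensityPoly

theorem exists_isKernel_homDensity_ne {ι : Type*} [Fintype ι] {V : ι → Type}
    [∀ i, Fintype (V i)] (G : ∀ i, SimpleGraph (V i)) (hconn : ∀ i, (G i).Connected)
    (hnoniso : ∀ i j, i ≠ j → IsEmpty (G i ≃g G j)) :
    ∃ Z, IsKernel Z ∧ (∀ i, homDensity (G i) Z ≠ 0) ∧
      ∀ i j, i ≠ j → homDensity (G i) Z ≠ homDensity (G j) Z := by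
  set n := ∑ i, Fintype.card (V i)
  have hn : ∀ i, Fintype.card (V i) ≤ n + 1 := fun i =>
    (single_le_sum (fun _ _ => Nat.zero_le _) (mem_univ i)).trans n.le_succ
  obtain ⟨x, hx⟩ := MvPolynomial.exists_forall_eval_ne_zero (univ.disjSum univ.offDiag)
    (Sum.elim (fun i => stepDensityPoly n (G i))
      fun ij => stepDensityPoly n (G ij.1) - stepDensityPoly n (G ij.2)) <| by
    rintro (i | ⟨i, j⟩) h
    · exact stepDensityPoly_ne_zero n (G i) (hn i)
    · exact sub_ne_zero.2 (stepDensityPoly_ne n (hconn i) (hconn j) (hn i) (hn j)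
        (hnoniso i j (by simpa using h)))
  refine ⟨stepKernel n x, isKernel_stepKernel n x, fun i => ?_, fun i j hij => ?_⟩
  · rw [homDensity_stepKernel]
    exact hx (.inl i) (by simp)
  · rw [homDensity_stepKernel, homDensity_stepKernel, ← sub_ne_zero, ← map_sub]
    exact hx (.inr (i, j)) (by simpa using hij)

theorem exists_homDensity_add_mul_separating {ι : Type*} [Fintype ι] {V : ι → Type}
    [∀ i, Fintype (V i)] (G : ∀ i, SimpleGraph (V i)) {U Z : UI → UI → ℝ} (hU : IsKernel U)
    (hZ : IsKernel Z) (j : ι) (hUj : homDensity (G j) U < 0)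
    (hZ0 : ∀ i, homDensity (G i) Z ≠ 0)
    (hZsep : ∀ i, i ≠ j → homDensity (G i) Z ≠ homDensity (G j) Z) :
    ∃ s : ℝ, homDensity (G j) (fun a b => U a b + s * Z a b) < 0 ∧
      ∀ i, i ≠ j → homDensity (G i) (fun a b => U a b + s * Z a b) ≠
        homDensity (G j) (fun a b => U a b + s * Z a b) := by
  obtain ⟨s, hs, hsep⟩ := Polynomial.exists_eval_neg_forall_eval_ne_zero
    (p := lineDensityPoly (G j) U Z) (by simpa [eval_lineDensityPoly (G j) hU hZ] using hUj)
    (univ.erase j) (fun i => lineDensityPoly (G i) U Z - lineDensityPoly (G j) U Z)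
    fun i hi => sub_ne_zero.2 (lineDensityPoly_ne U (hZ0 i) (hZ0 j) (hZsep i (ne_of_mem_erase hi)))
  refine ⟨s, by rwa [← eval_lineDensityPoly (G j) hU hZ], fun i hi => ?_⟩
  have := hsep i (mem_erase.2 ⟨hi, mem_univ i⟩)
  rwa [eval_sub, sub_ne_zero, eval_lineDensityPoly (G i) hU hZ, eval_lineDensityPoly (G j) hU hZ]
    at this

/-- For pairwise non-isomorphic connected non-positive graphs `G₁, …, G_m` there are kernels
`W₁, …, W_m` with `t(Gᵢ, Wᵢ) < 0` and `t(Gᵢ, Wⱼ) ≠ t(Gⱼ, Wⱼ)` for `i ≠ j`. -/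
theorem exists_separating_kernels {m : ℕ} (V : Fin m → Type) [∀ i, Fintype (V i)]
    (G : ∀ i, SimpleGraph (V i))
    (hconn : ∀ i, (G i).Connected)
    (hnoniso : ∀ i j, i ≠ j → IsEmpty ((G i) ≃g (G j)))
    (hneg : ∀ i, ∃ W : UI → UI → ℝ, IsKernel W ∧ homDensity (G i) W < 0) :
    ∃ W : Fin m → (UI → UI → ℝ),
      (∀ i, IsKernel (W i)) ∧
      (∀ i, homDensity (G i) (W i) < 0) ∧
      (∀ i j, i ≠ j → homDensity (G i) (W j) ≠ homDensity (G j) (W j)) := by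
  choose U hU hUneg using hneg
  obtain ⟨Z, hZ, hZ0, hZsep⟩ := exists_isKernel_homDensity_ne G hconn hnoniso
  choose s hs using fun j =>
    exists_homDensity_add_mul_separating G (hU j) hZ j (hUneg j) hZ0 fun i hij => hZsep i j hij
  exact ⟨fun j a b => U j a b + s j * Z a b, fun j => (hU j).add_const_mul hZ (s j),
    fun j => (hs j).1, fun i j hij => (hs j).2 i hij⟩

end
end

section
/- If a finite simple graph G is positive, then so is its r-fold blow-up G(r) for every positive integer r, where G(r) is obtained from G by replacing each vertex v with r copies v₁, …, v_r, and joining u_i to v_j if and only if uv ∈ E(G). -/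
open MeasureTheory

noncomputable section

/-- The `r`-fold blow-up of `G`: each vertex `v` is replaced by `r` copies, and `(u,i)` is
adjacent to `(v,j)` iff `uv ∈ E(G)`. -/
def blowup {V : Type} (G : SimpleGraph V) (r : ℕ) : SimpleGraph (V × Fin r) where
  Adj a b := G.Adj a.1 b.1
  symm := ⟨fun _ _ hab => G.adj_symm hab⟩
  loopless := ⟨fun a ha => G.irrefl ha⟩

/-! Choose a measure-preserving map `φ : [0,1] → [0,1]^r`; it exists because every probability
measure on a standard Borel space is the image of Lebesgue measure on `[0,1]`. Substituting
`p (v, i) = φ (q v) i` is then measure preserving from `[0,1]^V` to `[0,1]^(V × [r])`, and turns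
`t(G(r), W)` into `t(G, W^φ)` for the kernel `W^φ x y = ∏ i j, W (φ x i) (φ y j)`. -/

section MeasurePreserving

variable {ι κ X Y : Type*} [Fintype ι] [Fintype κ] [MeasurableSpace X] [MeasurableSpace Y]

theorem measurePreserving_uncurry_pi (μ : ι → κ → Measure Y)
    [∀ i j, IsProbabilityMeasure (μ i j)] :
    MeasurePreserving (Function.uncurry : (ι → κ → Y) → ι × κ → Y)
      (Measure.pi fun i ↦ Measure.pi fun j ↦ μ i j) (Measure.pi fun p : ι × κ ↦ μ p.1 p.2) := by
  refine ⟨(MeasurableEquiv.curry ι κ Y).symm.measurable, ?_⟩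
  simpa only [Measure.infinitePi_eq_pi, MeasurableEquiv.coe_curry_symm] using
    Measure.infinitePi_map_curry_symm μ

theorem measurePreserving_uncurry_comp_pi {μ : Measure X} {ν : Measure Y}
    [IsProbabilityMeasure ν] {φ : X → κ → Y} (hφ : MeasurePreserving φ μ (Measure.pi fun _ ↦ ν)) :
    MeasurePreserving (fun (q : ι → X) (p : ι × κ) ↦ φ (q p.1) p.2)
      (Measure.pi fun _ ↦ μ) (Measure.pi fun _ ↦ ν) :=
  (measurePreserving_uncurry_pi fun _ _ ↦ ν).comp (measurePreserving_pi _ _ fun _ ↦ hφ)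

end MeasurePreserving

def blowupKernel {ι : Type*} [Fintype ι] (W : UI → UI → ℝ) (φ : UI → ι → UI) : UI → UI → ℝ :=
  fun x y ↦ ∏ ij : ι × ι, W (φ x ij.1) (φ y ij.2)

theorem IsKernel.blowupKernel {ι : Type*} [Fintype ι] {W : UI → UI → ℝ} (hW : IsKernel W)
    {φ : UI → ι → UI} (hφ : Measurable φ) : IsKernel (blowupKernel W φ) := by
  obtain ⟨hW_meas, hW_symm, C, hC⟩ := hW
  refine ⟨?_, fun x y ↦ ?_, C ^ (Finset.univ : Finset (ι × ι)).card, fun x y ↦ ?_⟩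
  · exact Finset.measurable_prod _ fun ij _ ↦
      hW_meas.comp (f := fun xy : UI × UI ↦ (φ xy.1 ij.1, φ xy.2 ij.2)) (by fun_prop)
  · exact Fintype.prod_equiv (Equiv.prodComm ι ι) _ _ fun ij ↦ hW_symm _ _
  · rw [_root_.blowupKernel, Finset.abs_prod, ← Finset.prod_const]
    exact Finset.prod_le_prod (fun _ _ ↦ abs_nonneg _) fun _ _ ↦ hC _ _

theorem Sym2.mk_out {α : Type*} (e : Sym2 α) : s((Quot.out e).1, (Quot.out e).2) = e :=
  Quot.out_eq e

theorem Sym2.out_eq_or_out_eq_swap {α : Type*} (a b : α) :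
    Quot.out s(a, b) = (a, b) ∨ Quot.out s(a, b) = (b, a) :=
  Sym2.mk_eq_mk_iff.1 (Quot.out_eq s(a, b))

theorem Sym2.lift_eq_out {α β : Type*} (f : {f : α → α → β // ∀ a b, f a b = f b a})
    (e : Sym2 α) : Sym2.lift f e = f.1 (Quot.out e).1 (Quot.out e).2 := by
  conv_lhs => rw [← Sym2.mk_out e]
  exact Sym2.lift_mk ..

theorem SimpleGraph.adj_out {V : Type*} (G : SimpleGraph V) {e : Sym2 V} (he : e ∈ G.edgeSet) :
    G.Adj (Quot.out e).1 (Quot.out e).2 := by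
  rwa [← Sym2.mk_out e, SimpleGraph.mem_edgeSet] at he

theorem prod_edgeFinset_blowup {V : Type} {M : Type*} [CommMonoid M] (G : SimpleGraph V) (r : ℕ)
    [Fintype G.edgeSet] [Fintype (blowup G r).edgeSet] (f : Sym2 (V × Fin r) → M) :
    ∏ e ∈ (blowup G r).edgeFinset, f e =
      ∏ e ∈ G.edgeFinset, ∏ ij : Fin r × Fin r,
        f s(((Quot.out e).1, ij.1), ((Quot.out e).2, ij.2)) := by
  rw [← Finset.prod_product']
  symm
  refine Finset.prod_bij (fun x _ ↦ s(((Quot.out x.1).1, x.2.1), ((Quot.out x.1).2, x.2.2)))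
    ?_ ?_ ?_ fun _ _ ↦ rfl
  · rintro ⟨e, ij⟩ he
    simp only [Finset.mem_product, SimpleGraph.mem_edgeFinset] at he
    exact SimpleGraph.mem_edgeFinset.2 (G.adj_out he.1)
  · rintro ⟨e, i, j⟩ he ⟨e', i', j'⟩ - heq
    simp only [Finset.mem_product, SimpleGraph.mem_edgeFinset] at he
    obtain rfl : e = e' := by
      simpa only [Sym2.map_mk, Sym2.mk_out] using congrArg (Sym2.map Prod.fst) heq
    rcases Sym2.eq_iff.1 heq with ⟨h₁, h₂⟩ | ⟨h₁, -⟩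
    · simp_all
    · exact absurd (congrArg Prod.fst h₁) (G.adj_out he.1).ne
  · intro x hx
    induction x using Sym2.ind with | h a b => ?_
    have hab : G.Adj a.1 b.1 := (SimpleGraph.mem_edgeFinset.1 hx : (blowup G r).Adj a b)
    have he : s(a.1, b.1) ∈ G.edgeFinset := SimpleGraph.mem_edgeFinset.2 hab
    rcases Sym2.out_eq_or_out_eq_swap a.1 b.1 with h | h
    · exact ⟨(s(a.1, b.1), a.2, b.2), Finset.mem_product.2 ⟨he, Finset.mem_univ _⟩, by simp [h]⟩
    · exact ⟨(s(a.1, b.1), b.2, a.2), Finset.mem_product.2 ⟨he, Finset.mem_univ _⟩,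
        by simp [h, Sym2.eq_swap]⟩

open scoped Classical in
theorem homDensity_blowup {V : Type} [Fintype V] (G : SimpleGraph V) {r : ℕ} {W : UI → UI → ℝ}
    (hW : IsKernel W) {φ : UI → Fin r → UI} (hφ : MeasurePreserving φ) :
    homDensity (blowup G r) W = homDensity G (blowupKernel W φ) := by
  have hΨ : MeasurePreserving (fun (q : V → UI) (p : V × Fin r) ↦ φ (q p.1) p.2) :=
    measurePreserving_uncurry_comp_pi hφ
  have hprod (p : V × Fin r → UI) :
      ∏ e ∈ (blowup G r).edgeFinset, W (p (Quot.out e).1) (p (Quot.out e).2) =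
        ∏ e ∈ G.edgeFinset, ∏ ij : Fin r × Fin r,
          W (p ((Quot.out e).1, ij.1)) (p ((Quot.out e).2, ij.2)) := by
    have := prod_edgeFinset_blowup G r
      (Sym2.lift ⟨fun a b ↦ W (p a) (p b), fun a b ↦ hW.2.1 _ _⟩)
    simp only [Sym2.lift_mk] at this
    simpa only [Sym2.lift_eq_out] using this
  have hW_meas : Measurable fun xy : UI × UI ↦ W xy.1 xy.2 := hW.1
  unfold homDensity blowupKernel
  simp_rw [hprod]
  rw [← hΨ.map_eq, integral_map hΨ.measurable.aemeasurable]
  refine (Finset.measurable_prod _ fun e _ ↦ Finset.measurable_prod _ fun ij _ ↦ ?_)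
    |>.aestronglyMeasurable
  exact hW_meas.comp (by fun_prop : Measurable fun p : V × Fin r → UI ↦
    (p ((Quot.out e).1, ij.1), p ((Quot.out e).2, ij.2)))

theorem positive_blowup_general {V : Type} [Fintype V] (G : SimpleGraph V) (h : Positive G)
    (r : ℕ) : Positive (blowup G r) := by
  obtain ⟨φ, hφ_meas, hφ_map⟩ := Measure.exists_measurable_map_eq (volume : Measure (Fin r → UI))
  intro W hW
  rw [homDensity_blowup G hW ⟨hφ_meas, hφ_map⟩]
  exact h _ (hW.blowupKernel hφ_meas)

/-- If `G` is positive, then so is its `r`-fold blow-up for every positive integer `r`. -/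
theorem positive_blowup {V : Type} [Fintype V] (G : SimpleGraph V) (h : Positive G)
    (r : ℕ) (hr : 0 < r) : Positive (blowup G r) :=
  positive_blowup_general G h r
end
end

section
/- Let G be a finite simple graph and k a positive integer, and let G^k denote the disjoint union of k copies of G. Then r̄(G^k) = k · r̄(G), where the minima defining r̄ are taken over homomorphisms into K_n for any sufficiently large n (say n ≥ 2k|V(G)|). -/
/-!
Restricting `F : G^k → K_n` to the copies of `G` gives `f₁, …, f_k` with `∑ r(fᵢ) ≤ r(F)`: a
vertex of `K_n` hit by `c ≥ 1` copies is counted `c` times in `∑ |fᵢ(V)|` but once in `|F(V)|` and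
is odd for at most `c` of the `fᵢ`, which pays for it when `c ≥ 2`; when `c = 1` the edge
multiplicities at it are those of the single copy, so it is `F`-odd whenever it is odd for that
copy. Conversely, `r(f)` is invariant under relabelling the target and an optimal `f` uses at most
`|V|` vertices, so `k` relabelled copies of it fit on disjoint vertex sets of `K_n`; the resulting
`F` has `|F(V)| = ∑ |fᵢ(V)|` and each `F`-odd vertex is `fᵢ`-odd for some `i`, so
`r(F) ≤ k · r(f)`.
-/

open MeasureTheory

noncomputable section

open scoped Classical in
/-- A graph homomorphism `f : G → H` is even if for every edge `e` of `H`, the number of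
edges of `G` mapped by `f` onto `e` is even. -/
def IsEvenHom {V V' : Type} [Fintype V] [Fintype V'] {G : SimpleGraph V} {H : SimpleGraph V'}
    (f : G →g H) : Prop :=
  ∀ e ∈ H.edgeFinset, Even ((G.edgeFinset.filter (fun e' => Sym2.map (⇑f) e' = e)).card)

open scoped Classical in
/-- The set of `f`-odd vertices of `K_n`: those incident with an edge having an odd number
of preimage edges under `f`. -/
noncomputable def oddVerts {V : Type} [Fintype V] {G : SimpleGraph V} {n : ℕ}
    (f : G →g (⊤ : SimpleGraph (Fin n))) : Finset (Fin n) :=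
  Finset.univ.filter (fun v => ∃ e ∈ (⊤ : SimpleGraph (Fin n)).edgeFinset,
    Odd ((G.edgeFinset.filter (fun e' => Sym2.map (⇑f) e' = e)).card) ∧ v ∈ e)

open scoped Classical in
/-- `r(f) = |V(G)| − |f(V(G))| + |V_odd(f)|/2`. -/
noncomputable def rval {V : Type} [Fintype V] {G : SimpleGraph V} {n : ℕ}
    (f : G →g (⊤ : SimpleGraph (Fin n))) : ℝ :=
  (Fintype.card V : ℝ) - ((Finset.univ.image ⇑f).card : ℝ) + ((oddVerts f).card : ℝ) / 2

/-- `r̄(G) = min { r(f) : f : G → K_n }`. -/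
noncomputable def rbar {V : Type} [Fintype V] (G : SimpleGraph V) (n : ℕ) : ℝ :=
  sInf {x : ℝ | ∃ f : G →g (⊤ : SimpleGraph (Fin n)), rval f = x}

open scoped Classical in
/-- `p(G) = min { |V(G)| − |f(V(G))| : f : G → K_n even }`. -/
noncomputable def pval {V : Type} [Fintype V] (G : SimpleGraph V) (n : ℕ) : ℝ :=
  sInf {x : ℝ | ∃ f : G →g (⊤ : SimpleGraph (Fin n)), IsEvenHom f ∧
    (Fintype.card V : ℝ) - ((Finset.univ.image ⇑f).card : ℝ) = x}

/-- The disjoint union of `k` copies of `G`. -/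
def copies {V : Type} (G : SimpleGraph V) (k : ℕ) : SimpleGraph (Fin k × V) where
  Adj a b := a.1 = b.1 ∧ G.Adj a.2 b.2
  symm := ⟨fun _ _ hab => ⟨hab.1.symm, G.symm.symm _ _ hab.2⟩⟩
  loopless := ⟨fun a ha => G.loopless.irrefl a.2 ha.2⟩

open Finset Function

/-- With `A i` the image of the `i`-th copy of `G`, `O i` its odd vertices and `B` the odd vertices
of the whole homomorphism, this is the inequality `∑ i, r(fᵢ) ≤ r(F)`. -/
theorem Finset.sum_card_add_two_mul_card_biUnion_le {ι W : Type*} [Fintype ι] [Fintype W]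
    [DecidableEq W] (A O : ι → Finset W) (B : Finset W) (hOA : ∀ i, O i ⊆ A i)
    (hB : ∀ i, ∀ w ∈ O i, (∀ j ≠ i, w ∉ A j) → w ∈ B) :
    ∑ i, #(O i) + 2 * #(univ.biUnion A) ≤ #B + 2 * ∑ i, #(A i) := by
  have hcount : ∀ s : ι → Finset W, ∑ i, #(s i) = ∑ w, #{i | w ∈ s i} := fun s => by
    simpa [bipartiteAbove, bipartiteBelow] using
      sum_card_bipartiteAbove_eq_sum_card_bipartiteBelow (s := univ) (t := univ)
        (r := fun i w => w ∈ s i)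
  have hindicator : ∀ s : Finset W, #s = ∑ w, if w ∈ s then 1 else 0 := fun s => by
    simp
  rw [hcount, hcount, hindicator B, hindicator, mul_sum, mul_sum, ← sum_add_distrib,
    ← sum_add_distrib]
  refine sum_le_sum fun w _ => ?_
  have hmc : #{i | w ∈ O i} ≤ #{i | w ∈ A i} :=
    card_le_card fun i => by simpa using fun h => hOA i h
  by_cases hw : w ∈ univ.biUnion A
  · obtain hc | hc := (show 1 ≤ #{i | w ∈ A i} from
      card_pos.mpr (by simpa [Finset.Nonempty] using hw)).eq_or_lt
    · obtain ⟨i, hi⟩ := card_eq_one.mp hc.symm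
      have hcov : ∀ l, w ∈ A l → l = i := fun l hl => by
        simpa [hi] using (mem_filter.mpr ⟨mem_univ l, hl⟩ : l ∈ ({i | w ∈ A i} : Finset ι))
      have hmB : #{i | w ∈ O i} ≤ if w ∈ B then 1 else 0 := by
        split_ifs with h
        · exact hc ▸ hmc
        · refine (card_eq_zero.mpr (filter_eq_empty_iff.mpr fun j _ hj => h ?_)).le
          exact hB j w hj fun l hl hwl => hl (hcov l hwl ▸ (hcov j (hOA j hj)).symm)
      simp only [hw, if_true]
      omega
    · split_ifs <;> omega
  · have : #{i | w ∈ A i} = 0 := by simpa using hw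
    simp only [hw, if_false]
    omega

section CompleteGraphHom

variable {V : Type} {W W' : Type*} {G : SimpleGraph V} {k : ℕ}

def embedTarget (ψ : W ↪ W') (f : G →g (⊤ : SimpleGraph W)) : G →g (⊤ : SimpleGraph W') :=
  (SimpleGraph.Embedding.completeGraph ψ).toHom.comp f

@[simp]
lemma coe_embedTarget (ψ : W ↪ W') (f : G →g (⊤ : SimpleGraph W)) :
    ⇑(embedTarget ψ f) = ψ ∘ f :=
  rfl

def copyHom (i : Fin k) : G →g copies G k where
  toFun v := (i, v)
  map_rel' h := ⟨rfl, h⟩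

@[simp]
lemma copyHom_apply (i : Fin k) (v : V) : copyHom (G := G) i v = (i, v) :=
  rfl

def rangeRestrict (f : G →g (⊤ : SimpleGraph W)) : G →g (⊤ : SimpleGraph (Set.range f)) where
  toFun := Set.rangeFactorization f
  map_rel' h heq := f.map_adj h (congrArg Subtype.val heq)

lemma embedTarget_rangeRestrict (f : G →g (⊤ : SimpleGraph W)) :
    embedTarget (Embedding.subtype _) (rangeRestrict f) = f :=
  rfl

def copiesLift {H : SimpleGraph W} (f : Fin k → G →g H) : copies G k →g H where
  toFun p := f p.1 p.2
  map_rel' := by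
    rintro ⟨i, v⟩ ⟨j, w⟩ ⟨rfl, h⟩
    exact (f i).map_adj h

lemma copiesLift_comp_copyHom {H : SimpleGraph W} (f : Fin k → G →g H) (i : Fin k) :
    (copiesLift f).comp (copyHom i) = f i :=
  rfl

-- Adjacency is decided classically, as in `rval`; equality on the target is a binder so that
-- for `W = Fin n` the instances agree with those of `rval` and `oddVerts`.
variable [Fintype V] [DecidableEq W] [DecidableEq W']
open scoped Classical

def edgeMult (f : G →g (⊤ : SimpleGraph W)) (e : Sym2 W) : ℕ :=
  #{e' ∈ G.edgeFinset | e'.map f = e}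

lemma exists_map_eq_of_edgeMult_ne_zero {f : G →g (⊤ : SimpleGraph W)} {e : Sym2 W}
    (h : edgeMult f e ≠ 0) : ∃ e' ∈ G.edgeSet, e'.map f = e := by
  simpa [edgeMult, Finset.Nonempty] using card_ne_zero.mp h

lemma mem_image_of_edgeMult_ne_zero {f : G →g (⊤ : SimpleGraph W)} {e : Sym2 W} {w : W}
    (h : edgeMult f e ≠ 0) (hw : w ∈ e) : w ∈ univ.image f := by
  obtain ⟨e', -, rfl⟩ := exists_map_eq_of_edgeMult_ne_zero h
  obtain ⟨v, -, rfl⟩ := Sym2.mem_map.mp hw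
  exact mem_image_of_mem f (mem_univ v)

lemma edgeMult_embedTarget_map (ψ : W ↪ W') (f : G →g (⊤ : SimpleGraph W)) (e : Sym2 W) :
    edgeMult (embedTarget ψ f) (e.map ψ) = edgeMult f e := by
  simp only [edgeMult, coe_embedTarget, ← Sym2.map_map, (Sym2.map.injective ψ.injective).eq_iff]

lemma edgeFinset_copies :
    (copies G k).edgeFinset = univ.biUnion fun i => G.edgeFinset.image (Sym2.map (i, ·)) := by
  ext e
  induction e with | _ a b => ?_
  obtain ⟨i, x⟩ := a
  obtain ⟨j, y⟩ := b
  simp only [SimpleGraph.mem_edgeFinset, SimpleGraph.mem_edgeSet, mem_biUnion, mem_univ,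
    true_and, mem_image, Sym2.exists, Sym2.map_mk, Sym2.eq_iff]
  change i = j ∧ G.Adj x y ↔ _
  grind [G.adj_symm]

lemma edgeMult_eq_sum_comp_copyHom (F : copies G k →g (⊤ : SimpleGraph W)) (e : Sym2 W) :
    edgeMult F e = ∑ i, edgeMult (F.comp (copyHom i)) e := by
  have hdisj : Pairwise (Disjoint on fun i : Fin k => G.edgeFinset.image (Sym2.map (i, ·))) := by
    intro i j hij
    refine disjoint_left.mpr fun E hi hj => hij ?_
    obtain ⟨d, -, rfl⟩ := mem_image.mp hi
    obtain ⟨d', -, hd⟩ := mem_image.mp hj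
    induction d with | _ x y => ?_
    induction d' with | _ x' y' => ?_
    simp only [Sym2.map_mk, Sym2.eq_iff, Prod.mk.injEq] at hd
    grind
  rw [edgeMult, edgeFinset_copies, filter_biUnion, card_biUnion
    fun i _ j _ hij => disjoint_filter_filter (hdisj hij)]
  refine sum_congr rfl fun i _ => ?_
  rw [filter_image, card_image_of_injective _ (Sym2.map.injective (Prod.mk_right_injective i))]
  simp only [edgeMult, Sym2.map_map]
  rfl

lemma image_eq_biUnion_comp_copyHom (F : copies G k →g (⊤ : SimpleGraph W)) :
    univ.image F = univ.biUnion fun i => univ.image (F.comp (copyHom i)) := by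
  ext w
  simp

variable [Fintype W] [Fintype W']

def oddVerts' (f : G →g (⊤ : SimpleGraph W)) : Finset W :=
  {w | ∃ e, Odd (edgeMult f e) ∧ w ∈ e}

lemma mem_oddVerts' {f : G →g (⊤ : SimpleGraph W)} {w : W} :
    w ∈ oddVerts' f ↔ ∃ e, Odd (edgeMult f e) ∧ w ∈ e := by
  simp [oddVerts']

def rval' (f : G →g (⊤ : SimpleGraph W)) : ℝ :=
  Fintype.card V - #(univ.image f) + #(oddVerts' f) / 2

lemma oddVerts'_subset_image (f : G →g (⊤ : SimpleGraph W)) : oddVerts' f ⊆ univ.image f := by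
  intro w hw
  obtain ⟨e, he, hwe⟩ := mem_oddVerts'.mp hw
  exact mem_image_of_edgeMult_ne_zero he.pos.ne' hwe

lemma oddVerts'_embedTarget (ψ : W ↪ W') (f : G →g (⊤ : SimpleGraph W)) :
    oddVerts' (embedTarget ψ f) = (oddVerts' f).map ψ := by
  ext w'
  simp only [mem_oddVerts', mem_map]
  constructor
  · rintro ⟨e', he', hwe'⟩
    obtain ⟨d, -, rfl⟩ := exists_map_eq_of_edgeMult_ne_zero he'.pos.ne'
    rw [coe_embedTarget, ← Sym2.map_map, edgeMult_embedTarget_map] at he'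
    rw [coe_embedTarget, ← Sym2.map_map] at hwe'
    obtain ⟨w, hw, rfl⟩ := Sym2.mem_map.mp hwe'
    exact ⟨w, ⟨_, he', hw⟩, rfl⟩
  · rintro ⟨w, ⟨e, he, hwe⟩, rfl⟩
    exact ⟨e.map ψ, (edgeMult_embedTarget_map ψ f e).symm ▸ he, Sym2.mem_map.mpr ⟨w, hwe, rfl⟩⟩

lemma rval'_embedTarget (ψ : W ↪ W') (f : G →g (⊤ : SimpleGraph W)) :
    rval' (embedTarget ψ f) = rval' f := by
  rw [rval', rval', oddVerts'_embedTarget, card_map, coe_embedTarget, ← image_image,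
    card_image_of_injective _ ψ.injective]

lemma oddVerts'_subset_biUnion_comp_copyHom (F : copies G k →g (⊤ : SimpleGraph W)) :
    oddVerts' F ⊆ univ.biUnion fun i => oddVerts' (F.comp (copyHom i)) := by
  intro w hw
  obtain ⟨e, he, hwe⟩ := mem_oddVerts'.mp hw
  rw [edgeMult_eq_sum_comp_copyHom, odd_sum_iff_odd_card_odd] at he
  obtain ⟨i, hi⟩ := card_pos.mp he.pos
  exact mem_biUnion.mpr ⟨i, mem_univ i, mem_oddVerts'.mpr ⟨e, (mem_filter.mp hi).2, hwe⟩⟩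

lemma mem_oddVerts'_of_mem_oddVerts'_comp_copyHom (F : copies G k →g (⊤ : SimpleGraph W))
    {i : Fin k} {w : W} (hw : w ∈ oddVerts' (F.comp (copyHom i)))
    (hj : ∀ j ≠ i, w ∉ univ.image (F.comp (copyHom j))) : w ∈ oddVerts' F := by
  obtain ⟨e, he, hwe⟩ := mem_oddVerts'.mp hw
  have hsingle : edgeMult F e = edgeMult (F.comp (copyHom i)) e := by
    rw [edgeMult_eq_sum_comp_copyHom]
    refine sum_eq_single i (fun j _ hji => ?_) (by simp)
    by_contra hne
    exact hj j hji (mem_image_of_edgeMult_ne_zero hne hwe)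
  exact mem_oddVerts'.mpr ⟨e, hsingle ▸ he, hwe⟩

lemma sum_rval'_comp_copyHom_le (F : copies G k →g (⊤ : SimpleGraph W)) :
    ∑ i, rval' (F.comp (copyHom i)) ≤ rval' F := by
  have key := sum_card_add_two_mul_card_biUnion_le (fun i => univ.image (F.comp (copyHom i)))
    (fun i => oddVerts' (F.comp (copyHom i))) (oddVerts' F)
    (fun i => oddVerts'_subset_image _)
    (fun i w hw hj => mem_oddVerts'_of_mem_oddVerts'_comp_copyHom F hw hj)
  rw [← image_eq_biUnion_comp_copyHom] at key
  have keyR : (∑ i, (#(oddVerts' (F.comp (copyHom i))) : ℝ)) + 2 * #(univ.image F)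
      ≤ #(oddVerts' F) + 2 * ∑ i, (#(univ.image (F.comp (copyHom i))) : ℝ) := by
    exact_mod_cast key
  simp only [rval', sum_add_distrib, sum_sub_distrib, sum_const, card_univ, Fintype.card_fin,
    Fintype.card_prod, ← sum_div, nsmul_eq_mul]
  push_cast
  linarith

lemma rval'_le_sum_rval'_comp_copyHom (F : copies G k →g (⊤ : SimpleGraph W))
    (h : Pairwise (Disjoint on fun i => univ.image (F.comp (copyHom i)))) :
    rval' F ≤ ∑ i, rval' (F.comp (copyHom i)) := by
  have himage : #(univ.image F) = ∑ i, #(univ.image (F.comp (copyHom i))) := by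
    rw [image_eq_biUnion_comp_copyHom, card_biUnion fun i _ j _ hij => h hij]
  have hodd : #(oddVerts' F) ≤ ∑ i, #(oddVerts' (F.comp (copyHom i))) :=
    (card_le_card (oddVerts'_subset_biUnion_comp_copyHom F)).trans card_biUnion_le
  have hoddR : (#(oddVerts' F) : ℝ) ≤ ∑ i, (#(oddVerts' (F.comp (copyHom i))) : ℝ) := by
    exact_mod_cast hodd
  simp only [rval', sum_add_distrib, sum_sub_distrib, sum_const, card_univ, Fintype.card_fin,
    Fintype.card_prod, ← sum_div, nsmul_eq_mul, himage]
  push_cast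
  linarith

lemma exists_copies_rval'_le (f : G →g (⊤ : SimpleGraph W))
    (h : k * Fintype.card V ≤ Fintype.card W') :
    ∃ F : copies G k →g (⊤ : SimpleGraph W'), rval' F ≤ k * rval' f := by
  obtain ⟨enc⟩ : Nonempty (Fin k × Set.range f ↪ W') := by
    refine Embedding.nonempty_of_card_le ?_
    simpa [Fintype.card_prod] using (Nat.mul_le_mul_left k (Fintype.card_range_le f)).trans h
  let F := copiesLift fun i => embedTarget ((Embedding.sectR i _).trans enc) (rangeRestrict f)
  have hdisj : Pairwise (Disjoint on fun i => univ.image (F.comp (copyHom i))) := by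
    intro i j hij
    refine disjoint_left.mpr fun w hi hj => hij ?_
    obtain ⟨_, -, rfl⟩ := mem_image.mp hi
    obtain ⟨_, -, heq⟩ := mem_image.mp hj
    exact (congrArg Prod.fst (enc.injective heq)).symm
  refine ⟨F, ?_⟩
  calc rval' F ≤ ∑ i, rval' (F.comp (copyHom i)) := rval'_le_sum_rval'_comp_copyHom F hdisj
    _ = ∑ _i : Fin k, rval' f := by
      refine sum_congr rfl fun i _ => ?_
      rw [copiesLift_comp_copyHom, rval'_embedTarget, ← rval'_embedTarget (Embedding.subtype _),
        embedTarget_rangeRestrict]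
    _ = k * rval' f := by simp

end CompleteGraphHom

section FinTarget
open scoped Classical

variable {V : Type} [Fintype V] {G : SimpleGraph V} {n : ℕ}

lemma oddVerts_eq_oddVerts' (f : G →g (⊤ : SimpleGraph (Fin n))) :
    oddVerts f = oddVerts' f := by
  ext w
  simp only [oddVerts, mem_oddVerts', mem_filter, mem_univ, true_and]
  refine ⟨fun ⟨e, _, he⟩ => ⟨e, he⟩, fun ⟨e, he, hwe⟩ => ⟨e, ?_, he, hwe⟩⟩
  obtain ⟨e', he', rfl⟩ := exists_map_eq_of_edgeMult_ne_zero he.pos.ne'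
  exact SimpleGraph.mem_edgeFinset.mpr (f.map_mem_edgeSet he')

lemma rval_eq_rval' (f : G →g (⊤ : SimpleGraph (Fin n))) : rval f = rval' f := by
  rw [rval, rval', oddVerts_eq_oddVerts']

lemma rbar_le_rval (f : G →g (⊤ : SimpleGraph (Fin n))) : rbar G n ≤ rval f :=
  csInf_le (Set.finite_range rval).bddBelow ⟨f, rfl⟩

lemma exists_rval_eq_rbar (h : Fintype.card V ≤ n) :
    ∃ f : G →g (⊤ : SimpleGraph (Fin n)), rval f = rbar G n := by
  obtain ⟨e⟩ := Embedding.nonempty_of_card_le (h.trans_eq (Fintype.card_fin n).symm)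
  have hne : (Set.range (rval (G := G) (n := n))).Nonempty :=
    Set.range_nonempty_iff_nonempty.mpr ⟨embedTarget e (SimpleGraph.Hom.ofLE le_top)⟩
  exact hne.csInf_mem (Set.finite_range _)

end FinTarget

/-- `r̄(G^k) = k·r̄(G)` for the disjoint union `G^k` of `k` copies of `G`, for all
sufficiently large target complete graphs `K_n` (say `n ≥ 2k|V(G)|`). -/
theorem rbar_copies {V : Type} [Fintype V] (G : SimpleGraph V) (k : ℕ) (hk : 0 < k) :
    ∀ n : ℕ, 2 * k * Fintype.card V ≤ n →
      rbar (copies G k) n = (k : ℝ) * rbar G n := by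
  intro n hn
  have hkV : k * Fintype.card V ≤ n := (Nat.mul_le_mul_right _ (by omega)).trans hn
  have hV : Fintype.card V ≤ n := (Nat.le_mul_of_pos_left _ hk).trans hkV
  obtain ⟨f, hf⟩ := exists_rval_eq_rbar (G := G) hV
  obtain ⟨F, hF⟩ := exists_rval_eq_rbar (G := copies G k) (by simpa using hkV)
  apply le_antisymm
  · obtain ⟨F', hF'⟩ := exists_copies_rval'_le (k := k) (W' := Fin n) f (by simpa using hkV)
    calc rbar (copies G k) n ≤ rval F' := rbar_le_rval F'
      _ ≤ k * rbar G n := by rwa [← hf, rval_eq_rval', rval_eq_rval']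
  · calc (k : ℝ) * rbar G n = ∑ _i : Fin k, rbar G n := by simp
      _ ≤ ∑ i, rval (F.comp (copyHom i)) := sum_le_sum fun i _ => rbar_le_rval _
      _ ≤ rval F := by simpa only [rval_eq_rval'] using sum_rval'_comp_copyHom_le F
      _ = rbar (copies G k) n := hF
end
end
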